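/- arXiv:1601.05349 — 5 statements merged into one kernel-verified Lean document; each statement's English description precedes it below -/
import Mathlib

section
/- Let p > 1, λ, λ' > 1, h, h' ∈ ℝ, k ≥ 0, q ∈ ℝ, and set a = (p−1)/p. Let v_λ, v_{λ'} : ℝ → ℝ be C² solutions of the ODEs v_λ v_λ'' − (p/(p−1))(v_λ')² + λp v_λ' + (p−1)(v_λ² − v_λ) = 0 and v_{λ'} v_{λ'}'' − (p/(p−1))(v_{λ'}')² + λ'p v_{λ'}' + (p−1)(v_{λ'}² − v_{λ'}) = 0, and let ξ : I → ℝ be a differentiable function with p ξ' = (p−1)(ξ² − ξ). Define w₁(x,τ) := v_λ(x − λτ(1 − q e^{aτ}) + h), w₃(x,τ) := v_{λ'}(−x − λ'τ(1 − q e^{aτ}) + h'), w₂(τ) := ξ(τ) − 1, and w := w₁ + w₂ + w₃ − 1. Then the operator L(w) := w ∂_{xx}w − (p/(p−1))(∂_x w)² + (p−1)(w² − w) − p ∂_τ w satisfies the identity L(w) = (∂_{xx}w₃)(w₁ + w₂ − 1) + (∂_{xx}w₁)(w₃ + w₂ − 1) − (2p/(p−1))(∂_x w₁)(∂_x w₃)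 + 2(p−1)(w₁ − 1)(w₃ − 1) + 2(p−1) w₂ (w₁ + w₃ − 2) − p q λ (d/dτ)(τ e^{aτ}) ∂_x w₁ + p q λ' (d/dτ)(τ e^{aτ}) ∂_x w₃, at every point (x,τ) with τ ∈ I. -/
/-- The two traveling fronts with perturbed speed, and the middle cylinder part. -/
noncomputable def w1 (p lam h q : ℝ) (v : ℝ → ℝ) (x τ : ℝ) : ℝ :=
  v (x - lam * τ * (1 - q * Real.exp ((p - 1) / p * τ)) + h)

noncomputable def w3 (p lam' h' q : ℝ) (v' : ℝ → ℝ) (x τ : ℝ) : ℝ :=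
  v' (-x - lam' * τ * (1 - q * Real.exp ((p - 1) / p * τ)) + h')

/-- The pressure operator `L(w) = w w_xx − (p/(p−1)) w_x² + (p−1)(w² − w) − p w_τ`. -/
noncomputable def pressureOp (p : ℝ) (w : ℝ → ℝ → ℝ) (x τ : ℝ) : ℝ :=
  w x τ * deriv (deriv fun y => w y τ) x
    - p / (p - 1) * (deriv (fun y => w y τ) x) ^ 2
    + (p - 1) * ((w x τ) ^ 2 - w x τ)
    - p * deriv (fun s => w x s) τ

/-- the algebraic identity for `L(w)` with `w = w₁ + w₂ + w₃ − 1`,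
`w₂ = ξ − 1`, where `v_λ, v_{λ'}` solve the traveling-wave ODEs and `ξ` the cylinder ODE. -/
theorem pressure_operator_identity (p lam lam' h h' k q : ℝ)
    (hp : 1 < p) (hlam : 1 < lam) (hlam' : 1 < lam') (hk : 0 ≤ k)
    (v v' : ℝ → ℝ) (hv : ContDiff ℝ 2 v) (hv' : ContDiff ℝ 2 v')
    (hode : ∀ y : ℝ,
      v y * deriv (deriv v) y - p / (p - 1) * (deriv v y) ^ 2
        + lam * p * deriv v y + (p - 1) * ((v y) ^ 2 - v y) = 0)
    (hode' : ∀ y : ℝ,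
      v' y * deriv (deriv v') y - p / (p - 1) * (deriv v' y) ^ 2
        + lam' * p * deriv v' y + (p - 1) * ((v' y) ^ 2 - v' y) = 0)
    (I : Set ℝ) (hI : IsOpen I) (ξ : ℝ → ℝ)
    (hξdiff : ∀ τ ∈ I, DifferentiableAt ℝ ξ τ)
    (hξ : ∀ τ ∈ I, p * deriv ξ τ = (p - 1) * ((ξ τ) ^ 2 - ξ τ)) :
    ∀ x : ℝ, ∀ τ ∈ I,
      pressureOp p
        (fun x τ => w1 p lam h q v x τ + (ξ τ - 1) + w3 p lam' h' q v' x τ - 1) x τ =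
      deriv (deriv fun y => w3 p lam' h' q v' y τ) x
          * (w1 p lam h q v x τ + (ξ τ - 1) - 1)
        + deriv (deriv fun y => w1 p lam h q v y τ) x
          * (w3 p lam' h' q v' x τ + (ξ τ - 1) - 1)
        - 2 * p / (p - 1) * (deriv (fun y => w1 p lam h q v y τ) x)
          * (deriv (fun y => w3 p lam' h' q v' y τ) x)
        + 2 * (p - 1) * (w1 p lam h q v x τ - 1) * (w3 p lam' h' q v' x τ - 1)
        + 2 * (p - 1) * (ξ τ - 1)
          * (w1 p lam h q v x τ + w3 p lam' h' q v' x τ - 2)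
        - p * q * lam * deriv (fun s : ℝ => s * Real.exp ((p - 1) / p * s)) τ
          * (deriv (fun y => w1 p lam h q v y τ) x)
        + p * q * lam' * deriv (fun s : ℝ => s * Real.exp ((p - 1) / p * s)) τ
          * (deriv (fun y => w3 p lam' h' q v' y τ) x) := by
  intro x τ hτ
  have hp0 : p ≠ 0 := by linarith
  have hp1 : p - 1 ≠ 0 := by linarith
  have hvd : Differentiable ℝ v := hv.differentiable two_ne_zero
  have hv'd : Differentiable ℝ v' := hv'.differentiable two_ne_zero
  have hvdd : Differentiable ℝ (deriv v) :=
    ((contDiff_succ_iff_deriv.mp (show ContDiff ℝ (1 + 1) v from by norm_num [hv])).2.2).differentiable one_ne_zero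
  have hv'dd : Differentiable ℝ (deriv v') :=
    ((contDiff_succ_iff_deriv.mp (show ContDiff ℝ (1 + 1) v' from by norm_num [hv'])).2.2).differentiable one_ne_zero
  set a : ℝ := (p - 1) / p with ha
  set c1 : ℝ := h - lam * τ * (1 - q * Real.exp (a * τ)) with hc1
  set c3 : ℝ := h' - lam' * τ * (1 - q * Real.exp (a * τ)) with hc3
  -- the slices in x
  have hfun1 : (fun y => w1 p lam h q v y τ) = fun y => v (y + c1) := by
    funext y; simp only [w1, ← ha, hc1]; congr 1; ring
  have hfun3 : (fun y => w3 p lam' h' q v' y τ) = fun y => v' (c3 - y) := by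
    funext y; simp only [w3, ← ha, hc3]; congr 1; ring
  -- first x-derivatives of w1, w3
  have hdx1 : deriv (fun y => w1 p lam h q v y τ) x = deriv v (x + c1) := by
    rw [hfun1, deriv_comp_add_const]
  have hdx3 : deriv (fun y => w3 p lam' h' q v' y τ) x = -deriv v' (c3 - x) := by
    rw [hfun3, deriv_comp_const_sub]
  -- second x-derivatives
  have hD1 : deriv (fun y => v (y + c1)) = fun z => deriv v (z + c1) := by
    funext z; exact deriv_comp_add_const v c1 z
  have hD3 : deriv (fun y => v' (c3 - y)) = fun z => -deriv v' (c3 - z) := by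
    funext z; exact deriv_comp_const_sub v' c3 z
  have hdxx1 : deriv (deriv fun y => w1 p lam h q v y τ) x = deriv (deriv v) (x + c1) := by
    rw [hfun1, hD1, deriv_comp_add_const]
  have hdxx3 : deriv (deriv fun y => w3 p lam' h' q v' y τ) x = deriv (deriv v') (c3 - x) := by
    rw [hfun3, hD3]
    have : (fun z => -deriv v' (c3 - z)) = fun z => -(fun u => deriv v' (c3 - u)) z := rfl
    rw [this, deriv.fun_neg, deriv_comp_const_sub, neg_neg]
  -- differentiability of the slices
  have hdiff1 : ∀ z : ℝ, DifferentiableAt ℝ (fun y => v (y + c1)) z := fun z =>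
    (hvd (z + c1)).comp z (differentiableAt_id.add_const c1)
  have hdiff3 : ∀ z : ℝ, DifferentiableAt ℝ (fun y => v' (c3 - y)) z := fun z =>
    (hv'd (c3 - z)).comp z ((differentiableAt_const c3).sub differentiableAt_id)
  have hdiffd1 : ∀ z : ℝ, DifferentiableAt ℝ (fun y => deriv v (y + c1)) z := fun z =>
    (hvdd (z + c1)).comp z (differentiableAt_id.add_const c1)
  have hdiffd3 : ∀ z : ℝ, DifferentiableAt ℝ (fun y => -deriv v' (c3 - y)) z := fun z =>
    ((hv'dd (c3 - z)).comp z ((differentiableAt_const c3).sub differentiableAt_id)).neg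
  -- the combined slice
  have hfun : (fun y => w1 p lam h q v y τ + (ξ τ - 1) + w3 p lam' h' q v' y τ - 1)
      = fun y => (v (y + c1) + v' (c3 - y)) + (ξ τ - 2) := by
    funext y
    have e1 := congrFun hfun1 y
    have e3 := congrFun hfun3 y
    rw [e1, e3]; ring
  have hsum_x : deriv (fun y => w1 p lam h q v y τ + (ξ τ - 1) + w3 p lam' h' q v' y τ - 1) x
      = deriv v (x + c1) + (-deriv v' (c3 - x)) := by
    rw [hfun, deriv_add_const, deriv_fun_add (hdiff1 x) (hdiff3 x), deriv_comp_add_const,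
      deriv_comp_const_sub]
  have hsum_fun : deriv (fun y => (v (y + c1) + v' (c3 - y)) + (ξ τ - 2))
      = fun z => deriv v (z + c1) + (-deriv v' (c3 - z)) := by
    funext z
    rw [deriv_add_const, deriv_fun_add (hdiff1 z) (hdiff3 z), deriv_comp_add_const,
      deriv_comp_const_sub]
  have hsum_xx : deriv (deriv fun y => w1 p lam h q v y τ + (ξ τ - 1) + w3 p lam' h' q v' y τ - 1) x
      = deriv (deriv v) (x + c1) + deriv (deriv v') (c3 - x) := by
    rw [hfun, hsum_fun, deriv_fun_add (hdiffd1 x) (hdiffd3 x), deriv_comp_add_const]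
    have : (fun y => -deriv v' (c3 - y)) = fun z => -(fun u => deriv v' (c3 - u)) z := rfl
    rw [this, deriv.fun_neg, deriv_comp_const_sub, neg_neg]
  -- τ-derivative of s * exp(a s)
  have hexp : HasDerivAt (fun s : ℝ => Real.exp (a * s)) (Real.exp (a * τ) * a) τ := by
    simpa using ((hasDerivAt_id τ).const_mul a).exp
  have hE : HasDerivAt (fun s : ℝ => s * Real.exp (a * s))
      (1 * Real.exp (a * τ) + τ * (Real.exp (a * τ) * a)) τ := (hasDerivAt_id τ).mul hexp
  have hEval : deriv (fun s : ℝ => s * Real.exp (a * s)) τ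
      = 1 * Real.exp (a * τ) + τ * (Real.exp (a * τ) * a) := hE.deriv
  set E : ℝ := 1 * Real.exp (a * τ) + τ * (Real.exp (a * τ) * a) with hEdef
  -- τ-derivatives of w1, w3
  have hg1 : HasDerivAt (fun s : ℝ => x - lam * s * (1 - q * Real.exp (a * s)) + h)
      (-lam + lam * q * E) τ := by
    have hfeq : (fun s : ℝ => x - lam * s * (1 - q * Real.exp (a * s)) + h)
        = fun s => x + h - lam * s + lam * q * (s * Real.exp (a * s)) := by
      funext s; ring
    rw [hfeq]
    have := (((hasDerivAt_const τ (x + h)).fun_sub ((hasDerivAt_id τ).const_mul lam)).fun_add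
      (hE.const_mul (lam * q)))
    exact this.congr_deriv (by ring)
  have hg3 : HasDerivAt (fun s : ℝ => -x - lam' * s * (1 - q * Real.exp (a * s)) + h')
      (-lam' + lam' * q * E) τ := by
    have hfeq : (fun s : ℝ => -x - lam' * s * (1 - q * Real.exp (a * s)) + h')
        = fun s => -x + h' - lam' * s + lam' * q * (s * Real.exp (a * s)) := by
      funext s; ring
    rw [hfeq]
    have := (((hasDerivAt_const τ (-x + h')).fun_sub ((hasDerivAt_id τ).const_mul lam')).fun_add
      (hE.const_mul (lam' * q)))
    exact this.congr_deriv (by ring)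
  have harg1 : x - lam * τ * (1 - q * Real.exp (a * τ)) + h = x + c1 := by rw [hc1]; ring
  have harg3 : -x - lam' * τ * (1 - q * Real.exp (a * τ)) + h' = c3 - x := by rw [hc3]; ring
  have hw1τ : HasDerivAt (fun s : ℝ => w1 p lam h q v x s)
      (deriv v (x + c1) * (-lam + lam * q * E)) τ := by
    have := ((hvd _).hasDerivAt.comp τ hg1)
    rw [harg1] at this
    exact this
  have hw3τ : HasDerivAt (fun s : ℝ => w3 p lam' h' q v' x s)
      (deriv v' (c3 - x) * (-lam' + lam' * q * E)) τ := by
    have := ((hv'd _).hasDerivAt.comp τ hg3)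
    rw [harg3] at this
    exact this
  have hsum_τ : deriv (fun s => w1 p lam h q v x s + (ξ s - 1) + w3 p lam' h' q v' x s - 1) τ
      = deriv v (x + c1) * (-lam + lam * q * E) + deriv ξ τ
        + deriv v' (c3 - x) * (-lam' + lam' * q * E) := by
    exact (((hw1τ.add (((hξdiff τ hτ).hasDerivAt).sub_const 1)).add hw3τ).sub_const 1).deriv
  -- value of the combined function
  have hw1val : w1 p lam h q v x τ = v (x + c1) := by rw [w1, ← ha, harg1]
  have hw3val : w3 p lam' h' q v' x τ = v' (c3 - x) := by rw [w3, ← ha, harg3]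
  simp only [pressureOp]
  rw [hsum_x, hsum_xx, hsum_τ, hdx1, hdx3, hdxx1, hdxx3, hEval, hw1val, hw3val]
  linear_combination (hode (x + c1)) + (hode' (c3 - x)) - (hξ τ hτ)
end

section
/- Let p > 1, λ, λ' > 1, h, h' ∈ ℝ, q ≥ 0, and set a = (p−1)/p. Let v_λ, v_{λ'} : ℝ → ℝ be continuous, strictly decreasing functions with v_λ(y) → +∞ and v_{λ'}(y) → +∞ as y → −∞, and v_λ(y) → 1, v_{λ'}(y) → 1 as y → +∞, with v_λ > 1 and v_{λ'} > 1 pointwise. Then for every τ ∈ ℝ there exists a unique x(τ) ∈ ℝ such that v_λ(x(τ) − λτ(1 − q e^{aτ}) + h) = v_{λ'}(−x(τ) − λ'τ(1 − q e^{aτ}) + h'). If moreover there are constants C_λ, C_{λ'} > 0 and γ_λ, γ_{λ'} > 0 satisfying γ_λ² − λpγ_λ + (p−1) = 0 and γ_{λ'}² − λ'pγ_{λ'} + (p−1) = 0, such that v_λ(y) = 1 + C_λ e^{−γ_λ y} + o(e^{−γ_λ y}) and v_{λ'}(y) = 1 + C_{λ'} e^{−γ_{λ'} y} + o(e^{−γ_{λ'}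 y}) as y → +∞, then as τ → −∞, x(τ) = ((γ_λ − γ_{λ'})/p) τ + (1/(γ_λ + γ_{λ'})) ( ln(C_λ/C_{λ'}) + h'γ_{λ'} − hγ_λ ) + o(1). -/
open Filter Asymptotics
open Topology

/-- Existence and uniqueness of the intersection point `x(τ)` of the two
traveling fronts, and its first-order asymptotics as `τ → −∞` under the exponential
asymptotics of the profiles. Here `a = (p−1)/p`. -/
theorem intersection_point (p lam lam' h h' q : ℝ)
    (hp : 1 < p) (hlam : 1 < lam) (hlam' : 1 < lam') (hq : 0 ≤ q)
    (v v' : ℝ → ℝ) (hcont : Continuous v) (hcont' : Continuous v')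
    (hanti : StrictAnti v) (hanti' : StrictAnti v')
    (hbot : Tendsto v atBot atTop) (hbot' : Tendsto v' atBot atTop)
    (htop : Tendsto v atTop (nhds 1)) (htop' : Tendsto v' atTop (nhds 1))
    (hgt : ∀ y, 1 < v y) (hgt' : ∀ y, 1 < v' y) :
    (∀ τ : ℝ, ∃! x : ℝ,
      v (x - lam * τ * (1 - q * Real.exp ((p - 1) / p * τ)) + h) =
        v' (-x - lam' * τ * (1 - q * Real.exp ((p - 1) / p * τ)) + h')) ∧
    (∀ C C' γ γ' : ℝ, 0 < C → 0 < C' → 0 < γ → 0 < γ' →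
      γ ^ 2 - lam * p * γ + (p - 1) = 0 → γ' ^ 2 - lam' * p * γ' + (p - 1) = 0 →
      (fun y => v y - 1 - C * Real.exp (-γ * y)) =o[atTop]
        (fun y => Real.exp (-γ * y)) →
      (fun y => v' y - 1 - C' * Real.exp (-γ' * y)) =o[atTop]
        (fun y => Real.exp (-γ' * y)) →
      ∀ X : ℝ → ℝ,
        (∀ τ : ℝ, v (X τ - lam * τ * (1 - q * Real.exp ((p - 1) / p * τ)) + h) =
          v' (-X τ - lam' * τ * (1 - q * Real.exp ((p - 1) / p * τ)) + h')) →
        Tendsto (fun τ => X τ - (γ - γ') / p * τ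
            - 1 / (γ + γ') * (Real.log (C / C') + h' * γ' - h * γ))
          atBot (nhds 0)) := by
  have hp0 : (0:ℝ) < p := by linarith
  constructor
  · -- existence and uniqueness
    intro τ
    set A : ℝ := lam * τ * (1 - q * Real.exp ((p - 1) / p * τ)) with hA
    set B : ℝ := lam' * τ * (1 - q * Real.exp ((p - 1) / p * τ)) with hB
    set F : ℝ → ℝ := fun x => v (x - A + h) - v' (-x - B + h') with hF
    have hFcont : Continuous F := by
      apply Continuous.sub
      · exact hcont.comp (by continuity)
      · exact hcont'.comp (by continuity)
    have hFanti : StrictAnti F := by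
      intro x1 x2 hx
      exact sub_lt_sub (hanti (by linarith)) (hanti' (by linarith))
    have h1 : Tendsto F atBot atTop := by
      have hi : Tendsto (fun x : ℝ => x - A + h) atBot atBot := by
        apply tendsto_atBot_add_const_right
        exact tendsto_atBot_add_const_right _ _ tendsto_id
      have hi' : Tendsto (fun x : ℝ => -x - B + h') atBot atTop := by
        apply tendsto_atTop_add_const_right
        exact tendsto_atTop_add_const_right _ _ tendsto_neg_atBot_atTop
      have := (hbot.comp hi).atTop_add ((htop'.comp hi').neg)
      simpa [hF, Function.comp, sub_eq_add_neg] using this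
    have h2 : Tendsto F atTop atBot := by
      have hi : Tendsto (fun x : ℝ => x - A + h) atTop atTop := by
        apply tendsto_atTop_add_const_right
        exact tendsto_atTop_add_const_right _ _ tendsto_id
      have hi' : Tendsto (fun x : ℝ => -x - B + h') atTop atBot := by
        apply tendsto_atBot_add_const_right
        exact tendsto_atBot_add_const_right _ _ tendsto_neg_atTop_atBot
      have := (tendsto_neg_atTop_atBot.comp (hbot'.comp hi')).atBot_add (htop.comp hi)
      have heq : ∀ x : ℝ, F x = -v' (-x - B + h') + v (x - A + h) := by
        intro x; simp [hF]; ring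
      exact Tendsto.congr (fun x => (heq x).symm) this
    obtain ⟨x, hx⟩ := hFcont.surjective' h1 h2 0
    refine ⟨x, sub_eq_zero.mp hx, fun y hy => hFanti.injective ?_⟩
    have : F y = 0 := sub_eq_zero.mpr hy
    rw [this, hx]
  · intro C C' γ γ' hC hC' hγ hγ' hquad hquad' hlo hlo' X hX
    set a : ℝ := (p - 1) / p with ha
    have ha0 : 0 < a := by rw [ha]; exact div_pos (by linarith) hp0
    -- τ * exp (a τ) → 0 at -∞
    have hte : Tendsto (fun τ : ℝ => τ * Real.exp (a * τ)) atBot (𝓝 0) := by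
      have h1 : Tendsto (fun s : ℝ => s * Real.exp (-s)) atTop (𝓝 0) := by
        simpa using Real.tendsto_pow_mul_exp_neg_atTop_nhds_zero 1
      have h2 : Tendsto (fun τ : ℝ => -(a * τ)) atBot atTop := by
        rw [show (fun τ : ℝ => -(a * τ)) = (fun τ : ℝ => (-a) * τ) by funext τ; ring]
        exact (tendsto_const_mul_atTop_of_neg (by linarith)).mpr tendsto_id
      have h3 := (h1.comp h2).const_mul (-(1/a))
      rw [mul_zero] at h3
      refine h3.congr fun τ => ?_
      simp only [Function.comp_apply, neg_neg]
      field_simp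
    have hexp0 : Tendsto (fun τ : ℝ => Real.exp (a * τ)) atBot (𝓝 0) := by
      apply Real.tendsto_exp_atBot.comp
      exact (tendsto_const_mul_atBot_of_pos ha0).mpr tendsto_id
    set y : ℝ → ℝ := fun τ => X τ - lam * τ * (1 - q * Real.exp (a * τ)) + h with hy_def
    set y' : ℝ → ℝ := fun τ => -X τ - lam' * τ * (1 - q * Real.exp (a * τ)) + h' with hy'_def
    have hXe : ∀ τ, v (y τ) = v' (y' τ) := hX
    -- y + y' → +∞
    have hsum : Tendsto (fun τ => y τ + y' τ) atBot atTop := by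
      have hg1 : Tendsto (fun τ : ℝ => (-(lam + lam')) * τ) atBot atTop :=
        (tendsto_const_mul_atTop_of_neg (by linarith)).mpr tendsto_id
      have hg2 : Tendsto (fun τ : ℝ => (lam + lam') * q * (τ * Real.exp (a * τ)) + (h + h'))
          atBot (𝓝 ((lam + lam') * q * 0 + (h + h'))) :=
        ((hte.const_mul _).add_const _)
      have := hg1.atTop_add hg2
      refine this.congr fun τ => ?_
      simp only [hy_def, hy'_def]
      ring
    -- y → +∞
    have key_tendsto : ∀ (w w' : ℝ → ℝ), (∀ τ, v (w τ) = v' (w' τ)) →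
        Tendsto (fun τ => w τ + w' τ) atBot atTop → Tendsto w atBot atTop := by
      intro w w' hww hsum'
      rw [tendsto_atTop]
      intro M
      have hvM : 1 < v M := hgt M
      have hev : ∀ᶠ z in atTop, v' z < v M := htop'.eventually_lt_const hvM
      obtain ⟨N, hN⟩ := hev.exists_forall_of_atTop
      filter_upwards [hsum'.eventually_ge_atTop (M + N)] with τ hτ
      by_cases hyn : N ≤ w' τ
      · have : v (w τ) < v M := (hww τ) ▸ hN _ hyn
        exact le_of_lt (hanti.lt_iff_gt.mp this)
      · push_neg at hyn; linarith
    have hy : Tendsto y atBot atTop := key_tendsto y y' hXe hsum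
    have hy' : Tendsto y' atBot atTop := by
      have key' : ∀ (w w' : ℝ → ℝ), (∀ τ, v' (w' τ) = v (w τ)) →
          Tendsto (fun τ => w' τ + w τ) atBot atTop → Tendsto w' atBot atTop := by
        intro w w' hww hsum'
        rw [tendsto_atTop]
        intro M
        have hvM : 1 < v' M := hgt' M
        have hev : ∀ᶠ z in atTop, v z < v' M := htop.eventually_lt_const hvM
        obtain ⟨N, hN⟩ := hev.exists_forall_of_atTop
        filter_upwards [hsum'.eventually_ge_atTop (M + N)] with τ hτ
        by_cases hyn : N ≤ w τ
        · have : v' (w' τ) < v' M := (hww τ) ▸ hN _ hyn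
          exact le_of_lt (hanti'.lt_iff_gt.mp this)
        · push_neg at hyn; linarith
      refine key' y y' (fun τ => (hXe τ).symm) ?_
      exact hsum.congr fun τ => by ring
    -- profile ratios converge
    have ratio_lim : ∀ (u : ℝ → ℝ) (K κ : ℝ), 0 < K →
        ((fun z => u z - 1 - K * Real.exp (-κ * z)) =o[atTop] fun z => Real.exp (-κ * z)) →
        Tendsto (fun z => (u z - 1) * Real.exp (κ * z)) atTop (𝓝 K) := by
      intro u K κ hK hlou
      have h0 := hlou.tendsto_div_nhds_zero
      rw [← tendsto_sub_nhds_zero_iff]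
      refine h0.congr fun z => ?_
      have he : Real.exp (-κ * z) ≠ 0 := Real.exp_ne_zero _
      rw [div_eq_iff he]
      rw [show (-κ : ℝ) * z = -(κ * z) by ring, Real.exp_neg]
      field_simp
    have hP : Tendsto (fun τ => (v (y τ) - 1) * Real.exp (γ * y τ)) atBot (𝓝 C) :=
      (ratio_lim v C γ hC hlo).comp hy
    have hQ : Tendsto (fun τ => (v' (y' τ) - 1) * Real.exp (γ' * y' τ)) atBot (𝓝 C') :=
      (ratio_lim v' C' γ' hC' hlo').comp hy'
    have hratio := hP.div hQ (ne_of_gt hC')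
    have hexpD : Tendsto (fun τ => Real.exp (γ * y τ - γ' * y' τ)) atBot (𝓝 (C / C')) := by
      refine hratio.congr fun τ => ?_
      have hk : v (y τ) - 1 ≠ 0 := ne_of_gt (by linarith [hgt (y τ)])
      simp only [Pi.div_apply]
      rw [← hXe τ, mul_div_mul_left _ _ hk, ← Real.exp_sub]
    have hD : Tendsto (fun τ => γ * y τ - γ' * y' τ) atBot (𝓝 (Real.log (C / C'))) := by
      have hc : ContinuousAt Real.log (C / C') :=
        Real.continuousAt_log (ne_of_gt (div_pos hC hC'))
      have := hc.tendsto.comp hexpD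
      simpa [Function.comp_def, Real.log_exp] using this
    -- algebraic identity
    have hval : lam * p * γ = γ ^ 2 + (p - 1) := by linarith
    have hval' : lam' * p * γ' = γ' ^ 2 + (p - 1) := by linarith
    have hγγ' : γ + γ' ≠ 0 := by positivity
    have key : ∀ τ, X τ - (γ - γ') / p * τ
        - 1 / (γ + γ') * (Real.log (C / C') + h' * γ' - h * γ)
        = 1 / (γ + γ') * ((γ * y τ - γ' * y' τ) - Real.log (C / C'))
          - (γ - γ') / p * (q * (τ * Real.exp (a * τ))) := by
      intro τ
      simp only [hy_def, hy'_def]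
      field_simp
      linear_combination (-(τ * (1 - q * Real.exp (τ * a)))) * hquad +
        (τ * (1 - q * Real.exp (τ * a))) * hquad'
    have t1 : Tendsto (fun τ => 1 / (γ + γ') * ((γ * y τ - γ' * y' τ) - Real.log (C / C')))
        atBot (𝓝 0) := by
      have := (hD.sub_const (Real.log (C / C'))).const_mul (1 / (γ + γ'))
      simpa using this
    have t2 : Tendsto (fun τ => (γ - γ') / p * (q * (τ * Real.exp (a * τ)))) atBot (𝓝 0) := by
      have := ((hte.const_mul q).const_mul ((γ - γ') / p))
      simpa using this
    have := t1.sub t2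
    rw [sub_zero] at this
    exact this.congr fun τ => (key τ).symm
end

section
/- Under the hypotheses of the intersection lemma (v_λ, v_{λ'} continuous, strictly decreasing, tending to +∞ at −∞ and to 1 at +∞, strictly greater than 1, with asymptotics v_λ(y) = 1 + C_λ e^{−γ_λ y} + o(e^{−γ_λ y}) and v_{λ'}(y) = 1 + C_{λ'} e^{−γ_{λ'} y} + o(e^{−γ_{λ'} y}) as y → +∞, where C_λ, C_{λ'} > 0 and γ_λ, γ_{λ'} > 0 solve γ² − λpγ + (p−1) = 0 and γ² − λ'pγ + (p−1) = 0 respectively), let x(τ) denote the unique point where v_λ(x − λτ(1 − q e^{aτ}) + h) = v_{λ'}(−x − λ'τ(1 − q e^{aτ}) + h'), with a = (p−1)/p and q ≥ 0. Set d := (γ_λ γ_{λ'} + (p−1))/p. Then there is a constant C > 0 (depending on λ, λ', h, h', p) such that, as τ → −∞, v_λ(x(τ) − λτ(1 − q e^{aτ}) + h) = 1 + C e^{dτ} + o(e^{dτ}). -/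
open Filter Asymptotics

lemma log_asymp_aux {v : ℝ → ℝ} {C γ : ℝ} (hC : 0 < C)
    (hgt : ∀ y, 1 < v y)
    (hasymp : (fun y => v y - 1 - C * Real.exp (-γ * y)) =o[atTop]
      (fun y => Real.exp (-γ * y))) :
    Tendsto (fun y => Real.log (v y - 1) + γ * y) atTop (nhds (Real.log C)) := by
  have h0 : Tendsto (fun y => (v y - 1 - C * Real.exp (-γ * y)) / Real.exp (-γ * y))
      atTop (nhds 0) := hasymp.tendsto_div_nhds_zero
  have hdiv : Tendsto (fun y => (v y - 1) / Real.exp (-γ * y)) atTop (nhds C) := by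
    have h1 := h0.add_const C
    rw [zero_add] at h1
    refine h1.congr fun y => ?_
    field_simp
    ring
  have h2 := hdiv.log (ne_of_gt hC)
  refine h2.congr fun y => ?_
  rw [Real.log_div (by have := hgt y; linarith) (Real.exp_ne_zero _), Real.log_exp]
  ring

/-- At the intersection point `x(τ)` of the two traveling fronts, the common
value satisfies `v_λ(x(τ) − λτ(1 − q e^{aτ}) + h) = 1 + C e^{dτ} + o(e^{dτ})` as
`τ → −∞`, where `d = (γ_λ γ_{λ'} + (p−1))/p` and `a = (p−1)/p`. -/
theorem intersection_value_asymptotics (p lam lam' h h' q : ℝ)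
    (hp : 1 < p) (hlam : 1 < lam) (hlam' : 1 < lam') (hq : 0 ≤ q)
    (v v' : ℝ → ℝ) (hcont : Continuous v) (hcont' : Continuous v')
    (hanti : StrictAnti v) (hanti' : StrictAnti v')
    (hbot : Tendsto v atBot atTop) (hbot' : Tendsto v' atBot atTop)
    (htop : Tendsto v atTop (nhds 1)) (htop' : Tendsto v' atTop (nhds 1))
    (hgt : ∀ y, 1 < v y) (hgt' : ∀ y, 1 < v' y)
    (C C' γ γ' : ℝ) (hC : 0 < C) (hC' : 0 < C') (hγ : 0 < γ) (hγ' : 0 < γ')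
    (hroot : γ ^ 2 - lam * p * γ + (p - 1) = 0)
    (hroot' : γ' ^ 2 - lam' * p * γ' + (p - 1) = 0)
    (hasymp : (fun y => v y - 1 - C * Real.exp (-γ * y)) =o[atTop]
      (fun y => Real.exp (-γ * y)))
    (hasymp' : (fun y => v' y - 1 - C' * Real.exp (-γ' * y)) =o[atTop]
      (fun y => Real.exp (-γ' * y)))
    (X : ℝ → ℝ)
    (hX : ∀ τ : ℝ, v (X τ - lam * τ * (1 - q * Real.exp ((p - 1) / p * τ)) + h) =
      v' (-X τ - lam' * τ * (1 - q * Real.exp ((p - 1) / p * τ)) + h')) :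
    ∃ C₀ : ℝ, 0 < C₀ ∧
      (fun τ => v (X τ - lam * τ * (1 - q * Real.exp ((p - 1) / p * τ)) + h)
          - 1 - C₀ * Real.exp ((γ * γ' + (p - 1)) / p * τ)) =o[atBot]
        (fun τ => Real.exp ((γ * γ' + (p - 1)) / p * τ)) := by
  have hp0 : (0:ℝ) < p := by linarith
  have hp1 : (0:ℝ) < p - 1 := by linarith
  set a : ℝ := (p - 1) / p with ha_def
  have ha : 0 < a := div_pos hp1 hp0
  set d : ℝ := (γ * γ' + (p - 1)) / p with hd_def
  have hd : 0 < d := div_pos (by nlinarith) hp0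
  have hγγ' : (0:ℝ) < γ + γ' := by linarith
  have hne : (γ + γ') ≠ 0 := ne_of_gt hγγ'
  -- the key algebraic root relation
  have hld : γ * γ' * (lam + lam') * p = (γ + γ') * (γ * γ' + (p - 1)) := by
    linear_combination (-γ') * hroot + (-γ) * hroot'
  have hld' : γ * γ' * (lam + lam') = (γ + γ') * d := by
    rw [hd_def]; field_simp; linear_combination hld
  -- τ * exp(a τ) → 0 at -∞
  have hτe : Tendsto (fun τ : ℝ => τ * Real.exp (a * τ)) atBot (nhds 0) := by
    have h1 : Tendsto (fun x : ℝ => x * Real.exp (-x)) atTop (nhds 0) := by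
      simpa using Real.tendsto_pow_mul_exp_neg_atTop_nhds_zero 1
    have h2 : Tendsto (fun τ : ℝ => a * -τ) atBot atTop :=
      tendsto_neg_atBot_atTop.const_mul_atTop ha
    have h3 := (h1.comp h2).const_mul (-1/a)
    rw [mul_zero] at h3
    refine h3.congr fun τ => ?_
    have : Real.exp (-(a * -τ)) = Real.exp (a * τ) := by ring_nf
    simp only [Function.comp]
    rw [this]
    field_simp
  -- sum of arguments tends to +∞
  have hS : Tendsto (fun τ : ℝ =>
      -(lam + lam') * (τ * (1 - q * Real.exp (a * τ))) + (h + h')) atBot atTop := by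
    have hts : Tendsto (fun τ : ℝ => -(τ * (1 - q * Real.exp (a * τ)))) atBot atTop := by
      have hts0 : Tendsto (fun τ : ℝ => -τ + q * (τ * Real.exp (a * τ))) atBot atTop := by
        have := (hτe.const_mul q)
        rw [mul_zero] at this
        exact tendsto_atTop_add_right_of_le' atBot (-1)
          (by simpa using tendsto_neg_atBot_atTop)
          (this.eventually (eventually_ge_nhds (by norm_num : (-1:ℝ) < 0)))
      refine hts0.congr fun τ => by ring
    have := (hts.const_mul_atTop (by linarith : (0:ℝ) < lam + lam'))
    have h2 := tendsto_atTop_add_const_right atBot (h + h') this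
    refine h2.congr fun τ => by ring
  -- both arguments tend to +∞
  have hw : Tendsto (fun τ : ℝ =>
      X τ - lam * τ * (1 - q * Real.exp (a * τ)) + h) atBot atTop := by
    rw [tendsto_atTop]
    intro M
    obtain ⟨N, hN⟩ := eventually_atTop.mp (htop'.eventually (gt_mem_nhds (hgt M)))
    filter_upwards [hS.eventually_ge_atTop (M + N)] with τ hτ
    by_contra hyM
    push_neg at hyM
    have hy' : N ≤ -X τ - lam' * τ * (1 - q * Real.exp (a * τ)) + h' := by nlinarith
    have h1 : v M ≤ v (X τ - lam * τ * (1 - q * Real.exp (a * τ)) + h) :=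
      hanti.antitone hyM.le
    have h2 := hN _ hy'
    rw [← hX τ] at h2
    linarith
  have hw' : Tendsto (fun τ : ℝ =>
      -X τ - lam' * τ * (1 - q * Real.exp (a * τ)) + h') atBot atTop := by
    rw [tendsto_atTop]
    intro M
    obtain ⟨N, hN⟩ := eventually_atTop.mp (htop.eventually (gt_mem_nhds (hgt' M)))
    filter_upwards [hS.eventually_ge_atTop (M + N)] with τ hτ
    by_contra hyM
    push_neg at hyM
    have hy : N ≤ X τ - lam * τ * (1 - q * Real.exp (a * τ)) + h := by nlinarith
    have h1 : v' M ≤ v' (-X τ - lam' * τ * (1 - q * Real.exp (a * τ)) + h') :=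
      hanti'.antitone hyM.le
    have h2 := hN _ hy
    rw [hX τ] at h2
    linarith
  -- logarithmic asymptotics
  have hlogC := log_asymp_aux hC hgt hasymp
  have hlogC' := log_asymp_aux hC' hgt' hasymp'
  have hF : Tendsto (fun τ => Real.log (v (X τ - lam * τ * (1 - q * Real.exp (a * τ)) + h) - 1)
      + γ * (X τ - lam * τ * (1 - q * Real.exp (a * τ)) + h)) atBot (nhds (Real.log C)) := by
    exact hlogC.comp hw
  have hG : Tendsto (fun τ => Real.log (v (X τ - lam * τ * (1 - q * Real.exp (a * τ)) + h) - 1)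
      + γ' * (-X τ - lam' * τ * (1 - q * Real.exp (a * τ)) + h')) atBot (nhds (Real.log C')) := by
    have h0 : Tendsto (fun τ => Real.log (v' (-X τ - lam' * τ * (1 - q * Real.exp (a * τ)) + h') - 1)
        + γ' * (-X τ - lam' * τ * (1 - q * Real.exp (a * τ)) + h')) atBot (nhds (Real.log C')) := by
      exact hlogC'.comp hw'
    refine h0.congr fun τ => ?_
    rw [hX τ]
  -- main limit: log(v(y τ) - 1) - d τ converges
  set L₀ : ℝ := (γ' * Real.log C + γ * Real.log C' - γ * γ' * (h + h')) / (γ + γ') with hL₀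
  have hmain : Tendsto (fun τ =>
      Real.log (v (X τ - lam * τ * (1 - q * Real.exp (a * τ)) + h) - 1) - d * τ)
      atBot (nhds L₀) := by
    have T := ((((hF.const_mul γ').add (hG.const_mul γ)).sub
        (hτe.const_mul ((γ + γ') * d * q))).sub_const (γ * γ' * (h + h'))).div_const (γ + γ')
    have hlim : (γ' * Real.log C + γ * Real.log C' - (γ + γ') * d * q * 0
        - γ * γ' * (h + h')) / (γ + γ') = L₀ := by rw [hL₀]; ring
    rw [hlim] at T
    refine T.congr fun τ => ?_
    rw [div_eq_iff hne, hd_def]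
    have hpne : p ≠ 0 := hp0.ne'
    field_simp
    simp only [mul_comm τ a]
    linear_combination (-(τ * (1 - q * Real.exp (a * τ)))) * hld
  -- conclude
  refine ⟨Real.exp L₀, Real.exp_pos _, ?_⟩
  have hexp : Tendsto (fun τ => Real.exp (Real.log (v (X τ - lam * τ * (1 - q * Real.exp (a * τ)) + h) - 1) - d * τ)) atBot (nhds (Real.exp L₀)) := (Real.continuous_exp.tendsto _).comp hmain
  have heq : ∀ τ : ℝ, Real.exp
      (Real.log (v (X τ - lam * τ * (1 - q * Real.exp (a * τ)) + h) - 1) - d * τ) =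
      (v (X τ - lam * τ * (1 - q * Real.exp (a * τ)) + h) - 1) / Real.exp (d * τ) := by
    intro τ
    rw [Real.exp_sub, Real.exp_log (by have := hgt (X τ - lam * τ * (1 - q * Real.exp (a * τ)) + h); linarith)]
  have h6 := (hexp.congr heq).sub_const (Real.exp L₀)
  rw [sub_self] at h6
  have htend : Tendsto (fun τ =>
      (v (X τ - lam * τ * (1 - q * Real.exp (a * τ)) + h) - 1
        - Real.exp L₀ * Real.exp (d * τ)) / Real.exp (d * τ)) atBot (nhds 0) := by
    refine h6.congr fun τ => ?_
    have hE := Real.exp_ne_zero (d * τ)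
    field_simp
  exact (isLittleO_iff_tendsto (fun τ hτ => absurd hτ (Real.exp_ne_zero _))).mpr htend
end

section
/- Let p > 1 and c > 0. The function v₁(y) = 1 + c e^{−(p−1)y} is a smooth solution of the pressure traveling-wave equation with speed λ = 1: v₁ v₁'' − (p/(p−1)) (v₁')² + p v₁' + (p−1)(v₁² − v₁) = 0 for all y ∈ ℝ. -/
lemma deriv_exp_aux (c a : ℝ) :
    (deriv fun z : ℝ => 1 + c * Real.exp (a * z)) = fun y => c * a * Real.exp (a * y) := by
  funext y
  have h : HasDerivAt (fun z : ℝ => 1 + c * Real.exp (a * z))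
      (c * a * Real.exp (a * y)) y := by
    have := ((Real.hasDerivAt_exp (a * y)).comp y ((hasDerivAt_id y).const_mul a))
    simpa [mul_comm, mul_assoc, mul_left_comm] using
      ((this.const_mul c).const_add 1)
  exact h.deriv

/-- For `p > 1`, `c > 0`, the function `v₁(y) = 1 + c e^{−(p−1)y}` is a smooth
solution of the pressure traveling-wave equation with speed `λ = 1`:
`v₁ v₁'' − (p/(p−1))(v₁')² + p v₁' + (p−1)(v₁² − v₁) = 0`. -/
theorem barenblatt_pressure_profile (p c : ℝ) (hp : 1 < p) (hc : 0 < c) :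
    ContDiff ℝ (⊤ : ℕ∞) (fun y : ℝ => 1 + c * Real.exp (-(p - 1) * y)) ∧
    ∀ y : ℝ,
      (1 + c * Real.exp (-(p - 1) * y)) *
          deriv (deriv fun z : ℝ => 1 + c * Real.exp (-(p - 1) * z)) y
        - p / (p - 1) * (deriv (fun z : ℝ => 1 + c * Real.exp (-(p - 1) * z)) y) ^ 2
        + 1 * p * deriv (fun z : ℝ => 1 + c * Real.exp (-(p - 1) * z)) y
        + (p - 1) * ((1 + c * Real.exp (-(p - 1) * y)) ^ 2
            - (1 + c * Real.exp (-(p - 1) * y))) = 0 := by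
  constructor
  · exact contDiff_const.add (contDiff_const.mul (Real.contDiff_exp.comp
      ((contDiff_const.mul contDiff_id))))
  · intro y
    have h1 := deriv_exp_aux c (-(p - 1))
    have h2 : (deriv (deriv fun z : ℝ => 1 + c * Real.exp (-(p - 1) * z))) y
        = c * (-(p - 1)) * (-(p - 1)) * Real.exp (-(p - 1) * y) := by
      rw [h1]
      have h : HasDerivAt (fun z : ℝ => c * -(p - 1) * Real.exp (-(p - 1) * z))
          (c * (-(p - 1)) * (-(p - 1)) * Real.exp (-(p - 1) * y)) y := by
        have := ((Real.hasDerivAt_exp (-(p - 1) * y)).comp y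
          ((hasDerivAt_id y).const_mul (-(p - 1)))).const_mul (c * -(p - 1))
        simpa [mul_comm, mul_assoc, mul_left_comm] using this
      exact h.deriv
    rw [h2, h1]
    simp only
    have hp1 : p - 1 ≠ 0 := by linarith
    field_simp
    ring
end

section
/- Let p > 1 and let ξ, ζ : I → ℝ be differentiable functions on an open interval I. Then the function u(x,τ) := ξ(τ) + ζ(τ) cosh((p−1)x) satisfies the pressure equation p ∂_τ u = u ∂_{xx}u − (p/(p−1))(∂_x u)² + (p−1)(u² − u) at all (x,τ) ∈ ℝ × I if and only if (ξ, ζ) solves the ODE system: p ξ'(τ) = p(p−1) ζ(τ)² + (p−1)(ξ(τ)² − ξ(τ)) and p ζ'(τ) = (p−1) ζ(τ) ( −1 + (p+1) ξ(τ) ) for all τ ∈ I. -/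
private lemma cosh_d1 (a c d x : ℝ) :
    HasDerivAt (fun y => c + d * Real.cosh (a * y)) (d * (Real.sinh (a * x) * a)) x := by
  have h1 : HasDerivAt (fun y : ℝ => a * y) a x := by
    simpa using (hasDerivAt_id x).const_mul a
  exact (((Real.hasDerivAt_cosh (a * x)).comp x h1).const_mul d).const_add c

private lemma sinh_d1 (a d x : ℝ) :
    HasDerivAt (fun y => d * (Real.sinh (a * y) * a)) (d * (Real.cosh (a * x) * a * a)) x := by
  have h1 : HasDerivAt (fun y : ℝ => a * y) a x := by
    simpa using (hasDerivAt_id x).const_mul a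
  exact ((((Real.hasDerivAt_sinh (a * x)).comp x h1)).mul_const a).const_mul d

private lemma deriv1 (a c d x : ℝ) :
    deriv (fun y => c + d * Real.cosh (a * y)) x = d * (Real.sinh (a * x) * a) :=
  (cosh_d1 a c d x).deriv

private lemma deriv2 (a c d x : ℝ) :
    deriv (deriv fun y => c + d * Real.cosh (a * y)) x = d * (Real.cosh (a * x) * a * a) := by
  have : (deriv fun y => c + d * Real.cosh (a * y)) = fun y => d * (Real.sinh (a * y) * a) := by
    funext y; exact deriv1 a c d y
  rw [this]
  exact (sinh_d1 a d x).deriv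

/-- The ansatz `u(x,τ) = ξ(τ) + ζ(τ) cosh((p−1)x)` solves the pressure
equation `p ∂_τ u = u ∂_xx u − (p/(p−1))(∂_x u)² + (p−1)(u² − u)` on `ℝ × I`
if and only if `(ξ, ζ)` solves the King ODE system
`p ξ' = p(p−1)ζ² + (p−1)(ξ² − ξ)` and `p ζ' = (p−1)ζ(−1 + (p+1)ξ)` on `I`. -/
theorem king_ansatz_iff_system (p : ℝ) (hp : 1 < p)
    (I : Set ℝ) (hI : IsOpen I) (ξ ζ : ℝ → ℝ)
    (hξ : ∀ τ ∈ I, DifferentiableAt ℝ ξ τ)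
    (hζ : ∀ τ ∈ I, DifferentiableAt ℝ ζ τ) :
    (∀ x : ℝ, ∀ τ ∈ I,
      p * deriv (fun s => ξ s + ζ s * Real.cosh ((p - 1) * x)) τ =
        (ξ τ + ζ τ * Real.cosh ((p - 1) * x)) *
            deriv (deriv fun y => ξ τ + ζ τ * Real.cosh ((p - 1) * y)) x
          - p / (p - 1) * (deriv (fun y => ξ τ + ζ τ * Real.cosh ((p - 1) * y)) x) ^ 2
          + (p - 1) * ((ξ τ + ζ τ * Real.cosh ((p - 1) * x)) ^ 2
              - (ξ τ + ζ τ * Real.cosh ((p - 1) * x)))) ↔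
    (∀ τ ∈ I,
      p * deriv ξ τ = p * (p - 1) * (ζ τ) ^ 2 + (p - 1) * ((ξ τ) ^ 2 - ξ τ) ∧
      p * deriv ζ τ = (p - 1) * ζ τ * (-1 + (p + 1) * ξ τ)) := by
  have ha : p - 1 ≠ 0 := by linarith
  -- τ-derivative
  have hτd : ∀ x : ℝ, ∀ τ ∈ I,
      deriv (fun s => ξ s + ζ s * Real.cosh ((p - 1) * x)) τ =
        deriv ξ τ + deriv ζ τ * Real.cosh ((p - 1) * x) := by
    intro x τ hτ
    exact (((hξ τ hτ).hasDerivAt.add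
      ((hζ τ hτ).hasDerivAt.mul_const (Real.cosh ((p - 1) * x)))).deriv)
  -- reduce the PDE at (x,τ) to a linear relation in cosh
  have key : ∀ x : ℝ, ∀ τ ∈ I,
      ((p * deriv (fun s => ξ s + ζ s * Real.cosh ((p - 1) * x)) τ =
        (ξ τ + ζ τ * Real.cosh ((p - 1) * x)) *
            deriv (deriv fun y => ξ τ + ζ τ * Real.cosh ((p - 1) * y)) x
          - p / (p - 1) * (deriv (fun y => ξ τ + ζ τ * Real.cosh ((p - 1) * y)) x) ^ 2
          + (p - 1) * ((ξ τ + ζ τ * Real.cosh ((p - 1) * x)) ^ 2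
              - (ξ τ + ζ τ * Real.cosh ((p - 1) * x)))) ↔
        (p * deriv ξ τ + p * deriv ζ τ * Real.cosh ((p - 1) * x) =
          (p * (p - 1) * (ζ τ) ^ 2 + (p - 1) * ((ξ τ) ^ 2 - ξ τ)) +
          ((p - 1) * ζ τ * (-1 + (p + 1) * ξ τ)) * Real.cosh ((p - 1) * x))) := by
    intro x τ hτ
    rw [hτd x τ hτ, deriv1 (p - 1) (ξ τ) (ζ τ) x, deriv2 (p - 1) (ξ τ) (ζ τ) x]
    have hs : Real.sinh ((p - 1) * x) ^ 2 = Real.cosh ((p - 1) * x) ^ 2 - 1 :=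
      Real.sinh_sq ((p - 1) * x)
    constructor
    · intro h
      field_simp at h
      apply mul_left_cancel₀ ha
      linear_combination (p - 1) * h - p * (ζ τ) ^ 2 * (p - 1) ^ 2 * hs
    · intro h
      field_simp
      linear_combination h + p * (ζ τ) ^ 2 * (p - 1) * hs
  constructor
  · intro H τ hτ
    have h0 := (key 0 τ hτ).mp (H 0 τ hτ)
    have h1 := (key 1 τ hτ).mp (H 1 τ hτ)
    simp only [mul_zero, Real.cosh_zero, mul_one] at h0
    have hC : Real.cosh ((p - 1) * 1) - 1 ≠ 0 := by
      have : 1 < Real.cosh ((p - 1) * 1) := by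
        rw [Real.one_lt_cosh]
        simpa using ha
      linarith
    have hz : (p * deriv ζ τ - (p - 1) * ζ τ * (-1 + (p + 1) * ξ τ)) *
        (Real.cosh ((p - 1) * 1) - 1) = 0 := by linear_combination h1 - h0
    have hz2 : p * deriv ζ τ = (p - 1) * ζ τ * (-1 + (p + 1) * ξ τ) := by
      rcases mul_eq_zero.mp hz with h | h
      · linarith
      · exact absurd h hC
    exact ⟨by linarith, hz2⟩
  · intro H x τ hτ
    obtain ⟨h1, h2⟩ := H τ hτ
    rw [key x τ hτ]
    rw [h1, h2]
end
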